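/- Define v(z) = (exp(-2iz) - 1)/(exp(-2iz) + 1) and u(z) = i*v(z) + C₂. Then wherever exp(-2iz) ≠ -1 and v(z) ≠ 0, the pair (v, u) satisfies the system i v'(z) - u'(z) = 0 and i u'(z) + (d/dz)(1/v(z)) = (d/dz)(u'(z)/v(z)). -/

import Mathlib

open Complex

noncomputable def v (z : ℂ) : ℂ :=
  (Complex.exp (-2 * I * z) - 1) / (Complex.exp (-2 * I * z) + 1)

noncomputable def u (C₂ : ℂ) (z : ℂ) : ℂ := I * v z + C₂

/-!
Writing `E = exp (-2 i z)`, the function `v = (E - 1) / (E + 1) = -i tan z` solves the Riccati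
equation `v' = i (v² - 1)`. Since `u = i v + C₂`, this gives `u' = i v' = 1 - v²`, hence
`u' / v = 1 / v - v`, and the momentum equation `i u' + (1/v)' = (u'/v)'` collapses to
`i u' = -v'`, which is `u' = i v'` again.
-/

open Filter Topology

/-- The space-time holomorphic Navier–Stokes system with pressure `p(v) = 1 / v`, at the point `z`. -/
def SatisfiesNavierStokesAt (v u : ℂ → ℂ) (z : ℂ) : Prop :=
  I * deriv v z - deriv u z = 0 ∧
    I * deriv u z + deriv (fun w => 1 / v w) z = deriv (fun w => deriv u w / v w) z

lemma deriv_const_mul_add_const {𝕜 : Type*} [NontriviallyNormedField 𝕜] (f : 𝕜 → 𝕜) (a C : 𝕜) :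
    deriv (fun w => a * f w + C) = fun w => a * deriv f w := by
  rw [deriv_add_const' (f := fun w => a * f w), deriv_const_mul_field']

theorem satisfiesNavierStokesAt_of_riccati {f : ℂ → ℂ} {z : ℂ} (C : ℂ)
    (hf : ∀ᶠ w in 𝓝 z, HasDerivAt f (I * (f w ^ 2 - 1)) w) (hfz : f z ≠ 0) :
    SatisfiesNavierStokesAt f (fun w => I * f w + C) z := by
  have hf' : HasDerivAt f (I * (f z ^ 2 - 1)) z := hf.self_of_nhds
  simp only [SatisfiesNavierStokesAt, deriv_const_mul_add_const]
  refine ⟨sub_self _, ?_⟩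
  have hquot : (fun w => I * deriv f w / f w) =ᶠ[𝓝 z] fun w => 1 / f w - f w := by
    filter_upwards [hf] with w hw
    rw [hw.deriv]
    -- at a zero of `f` both sides are `0` because `1 / 0 = 0`
    rcases eq_or_ne (f w) 0 with h | h
    · simp [h]
    · field_simp
      linear_combination (f w ^ 2 - 1) * I_sq
  have hinv : HasDerivAt (fun w => 1 / f w) _ z := (hasDerivAt_const z (1 : ℂ)).div hf' hfz
  have hdiff : HasDerivAt (fun w => 1 / f w - f w) _ z := hinv.sub hf'
  rw [hquot.deriv_eq, hdiff.deriv, hinv.deriv, hf'.deriv]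
  linear_combination I * (f z ^ 2 - 1) * I_sq

theorem hasDerivAt_v {z : ℂ} (hz : Complex.exp (-2 * I * z) ≠ -1) :
    HasDerivAt v (I * (v z ^ 2 - 1)) z := by
  have hE : HasDerivAt (fun w => Complex.exp (-2 * I * w))
      (Complex.exp (-2 * I * z) * (-2 * I)) z := by
    simpa using ((hasDerivAt_id z).const_mul (-2 * I)).cexp
  have hden : Complex.exp (-2 * I * z) + 1 ≠ 0 := fun h => hz (eq_neg_of_add_eq_zero_left h)
  refine ((hE.sub_const 1).div (hE.add_const 1) hden).congr_deriv ?_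
  rw [v]
  generalize Complex.exp (-2 * I * z) = E at hden ⊢
  field_simp
  ring

theorem eventually_hasDerivAt_v {z : ℂ} (hz : Complex.exp (-2 * I * z) ≠ -1) :
    ∀ᶠ w in 𝓝 z, HasDerivAt v (I * (v w ^ 2 - 1)) w := by
  have hcont : Continuous fun w : ℂ => Complex.exp (-2 * I * w) := by fun_prop
  filter_upwards [hcont.continuousAt.eventually_ne hz] with w hw
  exact hasDerivAt_v hw

theorem navier_stokes_system (C₂ : ℂ) (z : ℂ)
    (h1 : Complex.exp (-2 * I * z) ≠ -1) (h2 : v z ≠ 0) :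
    I * deriv v z - deriv (u C₂) z = 0 ∧
    I * deriv (u C₂) z + deriv (fun w => 1 / v w) z
      = deriv (fun w => deriv (u C₂) w / v w) z :=
  satisfiesNavierStokesAt_of_riccati C₂ (eventually_hasDerivAt_v h1) h2
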